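/- Let P and Q be finite connected posets on disjoint sets X₁ and X₂ and let v ∈ X₂ with v ∉ min(Q). Then { I ⊆ X₁ ⊔ X₂ : I ◎ (P ↘_v Q) } = { X₁ ∪ J : J ◎ Q and v ∈ J } ∪ { J ⊆ X₂ : J ◎ Q and v ∉ J }; moreover, for J ◎ Q with v ∈ J, the induced subposet of P ↘_v Q on X₁ ∪ J equals the grafting P ↘_v J of P above the vertex v of the induced poset on J. -/

import Mathlib

open scoped Classical

/-- A finite poset on a subset (`carrier`) of an ambient type `α`. -/
structure FinPoset (α : Type*) where
  carrier : Finset α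
  le : α → α → Prop
  mem_of_le : ∀ ⦃x y⦄, le x y → x ∈ carrier ∧ y ∈ carrier
  le_refl : ∀ x ∈ carrier, le x x
  le_trans : ∀ ⦃x y z⦄, le x y → le y z → le x z
  le_antisymm : ∀ ⦃x y⦄, le x y → le y x → x = y

namespace FinPoset

variable {α : Type*} [DecidableEq α]

/-- The strict order `x <_P y`. -/
def lt (P : FinPoset α) (x y : α) : Prop := P.le x y ∧ x ≠ y

/-- `min(P)`: the set of minimal elements of `P`. -/
noncomputable def minSet (P : FinPoset α) : Finset α :=
  P.carrier.filter (fun x => ∀ y, P.le y x → y = x)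

/-- Connectivity of a subset `S`, for the graph with edges between comparable pairs. -/
def ConnOn (P : FinPoset α) (S : Set α) : Prop :=
  ∀ x ∈ S, ∀ y ∈ S,
    Relation.ReflTransGen (fun a b => a ∈ S ∧ b ∈ S ∧ (P.le a b ∨ P.le b a)) x y

/-- A finite poset is connected if it is nonempty and any two elements are linked by a
chain of comparable pairs. -/
def Connected (P : FinPoset α) : Prop :=
  P.carrier.Nonempty ∧ P.ConnOn ↑P.carrier

/-- `I` is a connected component of `S` (for the comparability graph of `P`). -/
def IsCC (P : FinPoset α) (S I : Set α) : Prop :=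
  I.Nonempty ∧ I ⊆ S ∧ P.ConnOn I ∧
    ∀ x ∈ I, ∀ y ∈ S, (P.le x y ∨ P.le y x) → y ∈ I

/-- `I_- = {x ∈ P \ I : ∃ y ∈ I, x ≤_P y}`. -/
noncomputable def below (P : FinPoset α) (I : Finset α) : Finset α :=
  (P.carrier \ I).filter (fun x => ∃ y ∈ I, P.le x y)

/-- `I ◎ P` : `I_-` is a singleton `{w}` with `w ∈ min(P)`, and `I` is a connected
component of `{x ∈ P : w <_P x}`. -/
def Circ (P : FinPoset α) (I : Finset α) : Prop :=
  ∃ w, P.below I = {w} ∧ w ∈ P.minSet ∧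
    P.IsCC {x | x ∈ P.carrier ∧ P.lt w x} ↑I

/-- The induced poset on a subset `S`. -/
def restrict (P : FinPoset α) (S : Finset α) : FinPoset α where
  carrier := P.carrier ∩ S
  le x y := P.le x y ∧ x ∈ S ∧ y ∈ S
  mem_of_le := by
    intro x y h
    rcases P.mem_of_le h.1 with ⟨hx, hy⟩
    exact ⟨Finset.mem_inter.2 ⟨hx, h.2.1⟩, Finset.mem_inter.2 ⟨hy, h.2.2⟩⟩
  le_refl := by
    intro x hx
    rcases Finset.mem_inter.1 hx with ⟨h1, h2⟩
    exact ⟨P.le_refl x h1, h2, h2⟩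
  le_trans := by
    rintro x y z ⟨h1, hx, hy⟩ ⟨h2, _, hz⟩
    exact ⟨P.le_trans h1 h2, hx, hz⟩
  le_antisymm := by
    rintro x y ⟨h1, _, _⟩ ⟨h2, _, _⟩
    exact P.le_antisymm h1 h2

/-- The grafting `P ↘_v Q` of `P` above the vertex `v` of `Q` (auxiliary version, with
the disjointness hypotheses as arguments). -/
def graftAux (P Q : FinPoset α) (v : α) (hd : Disjoint P.carrier Q.carrier)
    (hv : v ∈ Q.carrier) : FinPoset α where
  carrier := P.carrier ∪ Q.carrier
  le x y := P.le x y ∨ Q.le x y ∨ (Q.le x v ∧ y ∈ P.carrier)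
  mem_of_le := by
    rintro x y (h | h | ⟨h1, h2⟩)
    · rcases P.mem_of_le h with ⟨hx, hy⟩
      exact ⟨Finset.mem_union_left _ hx, Finset.mem_union_left _ hy⟩
    · rcases Q.mem_of_le h with ⟨hx, hy⟩
      exact ⟨Finset.mem_union_right _ hx, Finset.mem_union_right _ hy⟩
    · exact ⟨Finset.mem_union_right _ (Q.mem_of_le h1).1, Finset.mem_union_left _ h2⟩
  le_refl := by
    intro x hx
    rcases Finset.mem_union.1 hx with h | h
    · exact Or.inl (P.le_refl x h)
    · exact Or.inr (Or.inl (Q.le_refl x h))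
  le_trans := by
    rintro x y z (h1 | h1 | ⟨h1, h1'⟩) (h2 | h2 | ⟨h2, h2'⟩)
    · exact Or.inl (P.le_trans h1 h2)
    · exact absurd (Q.mem_of_le h2).1 (Finset.disjoint_left.1 hd (P.mem_of_le h1).2)
    · exact absurd (Q.mem_of_le h2).1 (Finset.disjoint_left.1 hd (P.mem_of_le h1).2)
    · exact absurd (P.mem_of_le h2).1 (Finset.disjoint_right.1 hd (Q.mem_of_le h1).2)
    · exact Or.inr (Or.inl (Q.le_trans h1 h2))
    · exact Or.inr (Or.inr ⟨Q.le_trans h1 h2, h2'⟩)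
    · exact Or.inr (Or.inr ⟨h1, (P.mem_of_le h2).2⟩)
    · exact absurd (Q.mem_of_le h2).1 (Finset.disjoint_left.1 hd h1')
    · exact absurd (Q.mem_of_le h2).1 (Finset.disjoint_left.1 hd h1')
  le_antisymm := by
    rintro x y (h1 | h1 | ⟨h1, h1'⟩) (h2 | h2 | ⟨h2, h2'⟩)
    · exact P.le_antisymm h1 h2
    · exact absurd (Q.mem_of_le h2).1 (Finset.disjoint_left.1 hd (P.mem_of_le h1).2)
    · exact absurd (Q.mem_of_le h2).1 (Finset.disjoint_left.1 hd (P.mem_of_le h1).2)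
    · exact absurd (P.mem_of_le h2).1 (Finset.disjoint_right.1 hd (Q.mem_of_le h1).2)
    · exact Q.le_antisymm h1 h2
    · exact absurd (Q.mem_of_le h1).1 (Finset.disjoint_left.1 hd h2')
    · exact absurd (P.mem_of_le h2).2 (Finset.disjoint_right.1 hd (Q.mem_of_le h1).1)
    · exact absurd (Q.mem_of_le h2).1 (Finset.disjoint_left.1 hd h1')
    · exact absurd (Q.mem_of_le h1).1 (Finset.disjoint_left.1 hd h2')
  
/-- The grafting `P ↘_v Q` of `P` above the vertex `v` of `Q`: the poset on
`X₁ ⊔ X₂` restricting to `P` on `X₁` and to `Q` on `X₂`, with `q ≤ p` for `q ∈ X₂`,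
`p ∈ X₁` iff `q ≤_Q v`.  (Junk value when the carriers are not disjoint or `v ∉ Q`.) -/
noncomputable def graft (P Q : FinPoset α) (v : α) : FinPoset α :=
  if h : Disjoint P.carrier Q.carrier ∧ v ∈ Q.carrier then P.graftAux Q v h.1 h.2 else P

/-- The set of subsets `I` of the carrier with `I ◎ P`. -/
noncomputable def circSet (P : FinPoset α) : Finset (Finset α) :=
  P.carrier.powerset.filter (fun I => P.Circ I)

/-- Order isomorphisms from `A` to `B`, encoded as maps `α → α` that are the identity
outside of the carrier of `A`. -/
def Isos (A B : FinPoset α) : Set (α → α) :=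
  {f | Set.BijOn f ↑A.carrier ↑B.carrier ∧
    (∀ x ∈ A.carrier, ∀ y ∈ A.carrier, (A.le x y ↔ B.le (f x) (f y))) ∧
    ∀ x, x ∉ A.carrier → f x = x}

/-- `⟨A, B⟩`: the number of order isomorphisms from `A` to `B`. -/
noncomputable def pairing (A B : FinPoset α) : ℕ := Nat.card ↥(Isos A B)

/-- The NAP coproduct `δ(P) = (1/|min(P)|) Σ_{I ◎ P} I ⊗ (P \ I)`, with values in the
rational vector space spanned by pairs of finite posets. -/
noncomputable def delta (P : FinPoset α) : (FinPoset α × FinPoset α) →₀ ℚ :=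
  ((P.minSet.card : ℚ))⁻¹ • ∑ I ∈ P.circSet,
    Finsupp.single (P.restrict I, P.restrict (P.carrier \ I)) (1 : ℚ)

end FinPoset

/-!
Write `G = P ↘_v Q`. Two elements of `Q` are comparable in `G` iff they are in `Q`, an element
of `P` is comparable with `y ∈ Q` iff `y ≤_Q v`, and `min G = min Q`; in particular the root `w`
of any `I ◎ G` lies in `Q` and differs from `v`, as `v ∉ min Q`. If `I` meets `P`, connectivity
of `P` forces `P ⊆ I`, hence `w ≤ v` and `v ∈ I`, and `I \ P ◎ Q`: collapsing `P` onto `v`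
turns paths in `I` into paths in `I \ P`. Otherwise `I ⊆ Q`, and `v ∉ I` because all of `P`
lies above `v`. The converse inclusions follow from the same description of comparabilities.
-/

namespace FinPoset

section Connectivity

variable {α β : Type*} {P : FinPoset α} {Q : FinPoset β}

protected theorem ext {A B : FinPoset α} (hc : A.carrier = B.carrier) (hle : A.le = B.le) :
    A = B := by
  cases A; cases B; cases hc; cases hle; rfl

theorem lt_of_lt_of_le {x y z : α} (hxy : P.lt x y) (hyz : P.le y z) : P.lt x z :=
  ⟨P.le_trans hxy.1 hyz, by rintro rfl; exact hxy.2 (P.le_antisymm hxy.1 hyz)⟩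

def Ioi (P : FinPoset α) (w : α) : Set α := {x | x ∈ P.carrier ∧ P.lt w x}

-- `P.ConnOn S` says that any two points of `S` are joined by an `AdjOn S`-path.
def AdjOn (P : FinPoset α) (S : Set α) (a b : α) : Prop :=
  a ∈ S ∧ b ∈ S ∧ Relation.SymmGen P.le a b

instance (S : Set α) : Std.Symm (P.AdjOn S) := ⟨fun _ _ ⟨ha, hb, h⟩ => ⟨hb, ha, h.symm⟩⟩

theorem AdjOn.mono {P Q : FinPoset α} {S T : Set α} (hST : S ⊆ T)
    (hle : ∀ x ∈ S, ∀ y ∈ S, P.le x y → Q.le x y) {a b : α} (h : P.AdjOn S a b) :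
    Q.AdjOn T a b :=
  ⟨hST h.1, hST h.2.1, h.2.2.imp (hle a h.1 b h.2.1) (hle b h.2.1 a h.1)⟩

theorem ConnOn.mono_le {P Q : FinPoset α} {S : Set α} (h : P.ConnOn S)
    (hle : ∀ x ∈ S, ∀ y ∈ S, P.le x y → Q.le x y) : Q.ConnOn S := fun x hx y hy =>
  Relation.ReflTransGen.mono (fun _ _ => AdjOn.mono subset_rfl hle) _ _ (h x hx y hy)

theorem connOn_of_forall_reflTransGen {S : Set α} {c : α}
    (h : ∀ x ∈ S, Relation.ReflTransGen (P.AdjOn S) x c) : P.ConnOn S :=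
  fun x hx y hy => (h x hx).trans (symm (h y hy))

theorem ConnOn.of_surjOn {S : Set α} {T : Set β} (hS : P.ConnOn S) (f : α → β)
    (hf : Set.SurjOn f S T)
    (hadj : ∀ a b, P.AdjOn S a b → Relation.ReflTransGen (Q.AdjOn T) (f a) (f b)) :
    Q.ConnOn T := by
  intro x hx y hy
  obtain ⟨a, ha, rfl⟩ := hf hx
  obtain ⟨b, hb, rfl⟩ := hf hy
  exact Relation.ReflTransGen.lift' f hadj _ _ (hS a ha b hb)

theorem IsCC.subset_of_connOn {S I T : Set α} (hI : P.IsCC S I) (hTS : T ⊆ S)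
    (hT : P.ConnOn T) {x : α} (hxT : x ∈ T) (hxI : x ∈ I) : T ⊆ I := by
  intro y hyT
  have hxy := hT x hxT y hyT
  clear hyT
  induction hxy with
  | refl => exact hxI
  | tail _ hbc ih => exact hI.2.2.2 _ ih _ (hTS hbc.2.1) hbc.2.2

end Connectivity

section Graft

variable {α : Type*} [DecidableEq α] {P Q : FinPoset α} {v w x y : α}

theorem restrict_le_iff {S : Finset α} :
    (P.restrict S).le x y ↔ P.le x y ∧ x ∈ S ∧ y ∈ S :=
  Iff.rfl

theorem restrict_carrier {S : Finset α} : (P.restrict S).carrier = P.carrier ∩ S :=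
  rfl

theorem mem_circSet {I : Finset α} : I ∈ P.circSet ↔ I ⊆ P.carrier ∧ P.Circ I := by
  simp [circSet]

theorem mem_below {I : Finset α} :
    x ∈ P.below I ↔ (x ∈ P.carrier ∧ x ∉ I) ∧ ∃ y ∈ I, P.le x y := by
  simp [below]


theorem graft_carrier (hd : Disjoint P.carrier Q.carrier) (hv : v ∈ Q.carrier) :
    (P.graft Q v).carrier = P.carrier ∪ Q.carrier := by
  rw [graft, dif_pos ⟨hd, hv⟩]; rfl

theorem mem_graft_carrier (hd : Disjoint P.carrier Q.carrier) (hv : v ∈ Q.carrier) :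
    x ∈ (P.graft Q v).carrier ↔ x ∈ P.carrier ∨ x ∈ Q.carrier := by
  rw [graft_carrier hd hv, Finset.mem_union]

theorem graft_le_iff (hd : Disjoint P.carrier Q.carrier) (hv : v ∈ Q.carrier) :
    (P.graft Q v).le x y ↔ P.le x y ∨ Q.le x y ∨ (Q.le x v ∧ y ∈ P.carrier) := by
  rw [graft, dif_pos ⟨hd, hv⟩]; rfl

theorem le_graft_of_le_left (hd : Disjoint P.carrier Q.carrier) (hv : v ∈ Q.carrier)
    (h : P.le x y) : (P.graft Q v).le x y :=
  (graft_le_iff hd hv).2 (Or.inl h)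

theorem le_graft_of_le_right (hd : Disjoint P.carrier Q.carrier) (hv : v ∈ Q.carrier)
    (h : Q.le x y) : (P.graft Q v).le x y :=
  (graft_le_iff hd hv).2 (Or.inr (Or.inl h))

theorem graft_le_iff_of_mem_right (hd : Disjoint P.carrier Q.carrier) (hv : v ∈ Q.carrier)
    (hy : y ∈ Q.carrier) : (P.graft Q v).le x y ↔ Q.le x y := by
  have hyP : y ∉ P.carrier := Finset.disjoint_right.1 hd hy
  have := @P.mem_of_le x y
  rw [graft_le_iff hd hv]
  tauto

theorem graft_le_iff_of_mem_right_of_mem_left (hd : Disjoint P.carrier Q.carrier)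
    (hv : v ∈ Q.carrier) (hx : x ∈ Q.carrier) (hy : y ∈ P.carrier) :
    (P.graft Q v).le x y ↔ Q.le x v := by
  have hxP : x ∉ P.carrier := Finset.disjoint_right.1 hd hx
  have hyQ : y ∉ Q.carrier := Finset.disjoint_left.1 hd hy
  have := @P.mem_of_le x y
  have := @Q.mem_of_le x y
  rw [graft_le_iff hd hv]
  tauto

theorem graft_symmGen_iff_of_mem_right (hd : Disjoint P.carrier Q.carrier)
    (hv : v ∈ Q.carrier) (hx : x ∈ Q.carrier) (hy : y ∈ Q.carrier) :
    Relation.SymmGen (P.graft Q v).le x y ↔ Relation.SymmGen Q.le x y :=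
  or_congr (graft_le_iff_of_mem_right hd hv hy) (graft_le_iff_of_mem_right hd hv hx)

theorem graft_symmGen_iff_of_mem_left_of_mem_right (hd : Disjoint P.carrier Q.carrier)
    (hv : v ∈ Q.carrier) (hx : x ∈ P.carrier) (hy : y ∈ Q.carrier) :
    Relation.SymmGen (P.graft Q v).le x y ↔ Q.le y v := by
  have hxQ : x ∉ Q.carrier := Finset.disjoint_left.1 hd hx
  have := @Q.mem_of_le x y
  rw [Relation.SymmGen, graft_le_iff_of_mem_right hd hv hy,
    graft_le_iff_of_mem_right_of_mem_left hd hv hy hx]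
  tauto

theorem mem_graft_Ioi_of_mem_right (hd : Disjoint P.carrier Q.carrier) (hv : v ∈ Q.carrier)
    (hy : y ∈ Q.carrier) : y ∈ (P.graft Q v).Ioi w ↔ y ∈ Q.Ioi w := by
  simp only [Ioi, lt, Set.mem_ofPred_eq, mem_graft_carrier hd hv, graft_le_iff_of_mem_right hd hv hy,
    hy, or_true, true_and]

theorem mem_graft_Ioi_of_mem_left (hd : Disjoint P.carrier Q.carrier) (hv : v ∈ Q.carrier)
    (hw : w ∈ Q.carrier) (hy : y ∈ P.carrier) : y ∈ (P.graft Q v).Ioi w ↔ Q.le w v := by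
  have hwy : w ≠ y := by rintro rfl; exact Finset.disjoint_left.1 hd hy hw
  simp only [Ioi, lt, Set.mem_ofPred_eq, mem_graft_carrier hd hv,
    graft_le_iff_of_mem_right_of_mem_left hd hv hw hy, hy, hwy, true_or, true_and, and_true,
    ne_eq, not_false_eq_true]

theorem graft_minSet (hd : Disjoint P.carrier Q.carrier) (hv : v ∈ Q.carrier) :
    (P.graft Q v).minSet = Q.minSet := by
  ext x
  simp only [minSet, Finset.mem_filter, mem_graft_carrier hd hv]
  by_cases hxQ : x ∈ Q.carrier
  · simp only [graft_le_iff_of_mem_right hd hv hxQ, hxQ, or_true, true_and]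
  · simp only [hxQ, or_false, false_and, iff_false, not_and, not_forall]
    intro hxP
    exact ⟨v, (graft_le_iff_of_mem_right_of_mem_left hd hv hv hxP).2 (Q.le_refl v hv),
      by rintro rfl; exact hxQ hv⟩

theorem graft_below_of_subset (hd : Disjoint P.carrier Q.carrier) (hv : v ∈ Q.carrier)
    {J : Finset α} (hJ : J ⊆ Q.carrier) : (P.graft Q v).below J = Q.below J := by
  ext x
  have hle : (∃ y ∈ J, (P.graft Q v).le x y) ↔ ∃ y ∈ J, Q.le x y :=
    exists_congr fun _ => and_congr_right fun hy => graft_le_iff_of_mem_right hd hv (hJ hy)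
  rw [mem_below, mem_below, hle, mem_graft_carrier hd hv]
  constructor
  · rintro ⟨⟨-, hxJ⟩, y, hyJ, hxy⟩
    exact ⟨⟨(Q.mem_of_le hxy).1, hxJ⟩, y, hyJ, hxy⟩
  · rintro ⟨⟨hxQ, hxJ⟩, h⟩
    exact ⟨⟨Or.inr hxQ, hxJ⟩, h⟩

theorem graft_below_union (hd : Disjoint P.carrier Q.carrier) (hv : v ∈ Q.carrier)
    {J : Finset α} (hJ : J ⊆ Q.carrier) (hvJ : v ∈ J) :
    (P.graft Q v).below (P.carrier ∪ J) = Q.below J := by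
  ext x
  simp only [mem_below, mem_graft_carrier hd hv, Finset.mem_union, not_or]
  constructor
  · rintro ⟨⟨hx, hxP, hxJ⟩, y, hy, hxy⟩
    have hxQ := hx.resolve_left hxP
    refine ⟨⟨hxQ, hxJ⟩, ?_⟩
    rcases hy with hyP | hyJ
    · exact ⟨v, hvJ, (graft_le_iff_of_mem_right_of_mem_left hd hv hxQ hyP).1 hxy⟩
    · exact ⟨y, hyJ, (graft_le_iff_of_mem_right hd hv (hJ hyJ)).1 hxy⟩
  · rintro ⟨⟨hxQ, hxJ⟩, y, hyJ, hxy⟩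
    exact ⟨⟨Or.inr hxQ, Finset.disjoint_right.1 hd hxQ, hxJ⟩, y, Or.inr hyJ,
      le_graft_of_le_right hd hv hxy⟩

theorem IsCC.graft_of_not_mem (hd : Disjoint P.carrier Q.carrier) (hv : v ∈ Q.carrier)
    {J : Set α} (hJ : Q.IsCC (Q.Ioi w) J) (hvJ : v ∉ J) :
    (P.graft Q v).IsCC ((P.graft Q v).Ioi w) J := by
  obtain ⟨hne, hsub, hconn, hclosed⟩ := hJ
  have hJQ : ∀ {x}, x ∈ J → x ∈ Q.carrier := fun hx => (hsub hx).1
  refine ⟨hne, fun x hx => (mem_graft_Ioi_of_mem_right hd hv (hJQ hx)).2 (hsub hx),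
    hconn.mono_le fun _ _ _ _ => le_graft_of_le_right hd hv, fun x hx y hy hxy => ?_⟩
  rcases (mem_graft_carrier hd hv).1 hy.1 with hyP | hyQ
  · have hxv : Q.le x v :=
      (graft_symmGen_iff_of_mem_left_of_mem_right hd hv hyP (hJQ hx)).1 hxy.symm
    exact absurd (hclosed x hx v ⟨hv, lt_of_lt_of_le (hsub hx).2 hxv⟩ (.inl hxv)) hvJ
  · exact hclosed x hx y ((mem_graft_Ioi_of_mem_right hd hv hyQ).1 hy)
      ((graft_symmGen_iff_of_mem_right hd hv (hJQ hx) hyQ).1 hxy)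

theorem IsCC.of_graft (hd : Disjoint P.carrier Q.carrier) (hv : v ∈ Q.carrier) {J : Set α}
    (hJ : (P.graft Q v).IsCC ((P.graft Q v).Ioi w) J) (hJQ : J ⊆ Q.carrier) :
    Q.IsCC (Q.Ioi w) J := by
  obtain ⟨hne, hsub, hconn, hclosed⟩ := hJ
  refine ⟨hne, fun x hx => (mem_graft_Ioi_of_mem_right hd hv (hJQ hx)).1 (hsub hx),
    hconn.mono_le fun _ _ _ hy => (graft_le_iff_of_mem_right hd hv (hJQ hy)).1,
    fun x hx y hy hxy => ?_⟩
  exact hclosed x hx y ((mem_graft_Ioi_of_mem_right hd hv hy.1).2 hy)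
    (hxy.imp (le_graft_of_le_right hd hv) (le_graft_of_le_right hd hv))

theorem IsCC.graft_union (hd : Disjoint P.carrier Q.carrier) (hv : v ∈ Q.carrier) {J : Set α}
    (hJ : Q.IsCC (Q.Ioi w) J) (hvJ : v ∈ J) :
    (P.graft Q v).IsCC ((P.graft Q v).Ioi w) (↑P.carrier ∪ J) := by
  obtain ⟨-, hsub, hconn, hclosed⟩ := hJ
  have hJQ : ∀ {x}, x ∈ J → x ∈ Q.carrier := fun hx => (hsub hx).1
  have hwQ : w ∈ Q.carrier := (Q.mem_of_le (hsub hvJ).2.1).1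
  refine ⟨⟨v, Or.inr hvJ⟩, ?_, ?_, fun x hx y hy hxy => ?_⟩
  · rintro x (hxP | hxJ)
    · exact (mem_graft_Ioi_of_mem_left hd hv hwQ hxP).2 (hsub hvJ).2.1
    · exact (mem_graft_Ioi_of_mem_right hd hv (hJQ hxJ)).2 (hsub hxJ)
  · refine connOn_of_forall_reflTransGen (c := v) fun x hx => ?_
    rcases hx with hxP | hxJ
    · exact .single ⟨Or.inl hxP, Or.inr hvJ,
        (graft_symmGen_iff_of_mem_left_of_mem_right hd hv hxP hv).2 (Q.le_refl v hv)⟩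
    · exact Relation.ReflTransGen.mono
        (fun _ _ => AdjOn.mono Set.subset_union_right fun _ _ _ _ => le_graft_of_le_right hd hv)
        _ _ (hconn x hxJ v hvJ)
  · rcases (mem_graft_carrier hd hv).1 hy.1 with hyP | hyQ
    · exact Or.inl hyP
    · have hyIoi := (mem_graft_Ioi_of_mem_right hd hv hyQ).1 hy
      right
      rcases hx with hxP | hxJ
      · exact hclosed v hvJ y hyIoi
          (.inr ((graft_symmGen_iff_of_mem_left_of_mem_right hd hv hxP hyQ).1 hxy))
      · exact hclosed x hxJ y hyIoi ((graft_symmGen_iff_of_mem_right hd hv (hJQ hxJ) hyQ).1 hxy)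

theorem IsCC.of_graft_union (hd : Disjoint P.carrier Q.carrier) (hv : v ∈ Q.carrier)
    {J : Set α} (hI : (P.graft Q v).IsCC ((P.graft Q v).Ioi w) (↑P.carrier ∪ J))
    (hJQ : J ⊆ Q.carrier) (hvJ : v ∈ J) : Q.IsCC (Q.Ioi w) J := by
  obtain ⟨-, hsub, hconn, hclosed⟩ := hI
  have hJP : ∀ {x}, x ∈ J → x ∉ P.carrier := fun hx => Finset.disjoint_right.1 hd (hJQ hx)
  refine ⟨⟨v, hvJ⟩, fun x hx => (mem_graft_Ioi_of_mem_right hd hv (hJQ hx)).1 (hsub (Or.inr hx)),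
    ?_, fun x hx y hy hxy => ?_⟩
  · refine hconn.of_surjOn (fun a => if a ∈ P.carrier then v else a)
      (fun x hx => ⟨x, Or.inr hx, if_neg (hJP hx)⟩) ?_
    have hPJ : ∀ {a b}, a ∈ P.carrier → b ∈ J → Relation.SymmGen (P.graft Q v).le a b →
        Q.AdjOn J v b := fun ha hb hab =>
      ⟨hvJ, hb, .inr ((graft_symmGen_iff_of_mem_left_of_mem_right hd hv ha (hJQ hb)).1 hab)⟩
    rintro a b ⟨ha, hb, hab⟩
    by_cases haP : a ∈ P.carrier <;> by_cases hbP : b ∈ P.carrier <;>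
      simp only [haP, hbP, if_true, if_false]
    · rfl
    · exact .single (hPJ haP (Or.resolve_left hb hbP) hab)
    · exact .single (symm (hPJ hbP (Or.resolve_left ha haP) hab.symm))
    · have haJ : a ∈ J := Or.resolve_left ha haP
      have hbJ : b ∈ J := Or.resolve_left hb hbP
      exact .single ⟨haJ, hbJ, (graft_symmGen_iff_of_mem_right hd hv (hJQ haJ) (hJQ hbJ)).1 hab⟩
  · have := hclosed x (Or.inr hx) y ((mem_graft_Ioi_of_mem_right hd hv hy.1).2 hy)
      (hxy.imp (le_graft_of_le_right hd hv) (le_graft_of_le_right hd hv))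
    exact this.resolve_left (Finset.disjoint_right.1 hd hy.1)

theorem IsCC.graft_cases (hd : Disjoint P.carrier Q.carrier) (hv : v ∈ Q.carrier)
    (hP : P.Connected) (hwQ : w ∈ Q.carrier) (hwv : w ≠ v) {I : Set α}
    (hI : (P.graft Q v).IsCC ((P.graft Q v).Ioi w) I) :
    (↑P.carrier ⊆ I ∧ v ∈ I) ∨ (I ⊆ Q.carrier ∧ v ∉ I) := by
  have hvp : ∀ p ∈ P.carrier, (P.graft Q v).le v p := fun p hp =>
    (graft_le_iff_of_mem_right_of_mem_left hd hv hv hp).2 (Q.le_refl v hv)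
  have hPIoi : Q.le w v → ↑P.carrier ⊆ (P.graft Q v).Ioi w := fun h p hp =>
    (mem_graft_Ioi_of_mem_left hd hv hwQ hp).2 h
  by_cases hPI : ∃ p ∈ P.carrier, p ∈ I
  · obtain ⟨p, hp, hpI⟩ := hPI
    have hwv' : Q.le w v := (mem_graft_Ioi_of_mem_left hd hv hwQ hp).1 (hI.2.1 hpI)
    have hvIoi : v ∈ (P.graft Q v).Ioi w :=
      (mem_graft_Ioi_of_mem_right hd hv hv).2 ⟨hv, hwv', hwv⟩
    exact Or.inl ⟨hI.subset_of_connOn (hPIoi hwv')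
      (hP.2.mono_le fun _ _ _ _ => le_graft_of_le_left hd hv) hp hpI,
      hI.2.2.2 p hpI v hvIoi (.inr (hvp p hp))⟩
  · push Not at hPI
    refine Or.inr ⟨fun x hx => ((mem_graft_carrier hd hv).1 (hI.2.1 hx).1).resolve_left
      fun hxP => hPI x hxP hx, fun hvI => ?_⟩
    obtain ⟨p, hp⟩ := hP.1
    have hwv' : Q.le w v := ((mem_graft_Ioi_of_mem_right hd hv hv).1 (hI.2.1 hvI)).2.1
    exact hPI p hp (hI.2.2.2 v hvI p (hPIoi hwv' hp) (.inl (hvp p hp)))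

theorem circ_graft_iff_of_not_mem (hd : Disjoint P.carrier Q.carrier) (hv : v ∈ Q.carrier)
    {J : Finset α} (hJQ : J ⊆ Q.carrier) (hvJ : v ∉ J) : (P.graft Q v).Circ J ↔ Q.Circ J := by
  unfold Circ
  rw [graft_minSet hd hv, graft_below_of_subset hd hv hJQ]
  exact exists_congr fun _ => and_congr_right fun _ => and_congr_right fun _ =>
    ⟨fun h => h.of_graft hd hv hJQ, fun h => h.graft_of_not_mem hd hv hvJ⟩

theorem circ_graft_union_iff (hd : Disjoint P.carrier Q.carrier) (hv : v ∈ Q.carrier)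
    {J : Finset α} (hJQ : J ⊆ Q.carrier) (hvJ : v ∈ J) :
    (P.graft Q v).Circ (P.carrier ∪ J) ↔ Q.Circ J := by
  unfold Circ
  rw [graft_minSet hd hv, graft_below_union hd hv hJQ hvJ, Finset.coe_union]
  exact exists_congr fun _ => and_congr_right fun _ => and_congr_right fun _ =>
    ⟨fun h => h.of_graft_union hd hv hJQ hvJ, fun h => h.graft_union hd hv hvJ⟩

theorem Circ.graft_cases (hd : Disjoint P.carrier Q.carrier) (hv : v ∈ Q.carrier)
    (hP : P.Connected) (hvm : v ∉ Q.minSet) {I : Finset α} (hI : (P.graft Q v).Circ I) :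
    (P.carrier ⊆ I ∧ v ∈ I) ∨ (I ⊆ Q.carrier ∧ v ∉ I) := by
  obtain ⟨w, -, hw, hwI⟩ := hI
  rw [graft_minSet hd hv] at hw
  exact_mod_cast hwI.graft_cases hd hv hP (Finset.mem_filter.1 hw).1 (by rintro rfl; exact hvm hw)

theorem graft_restrict_union (hd : Disjoint P.carrier Q.carrier) (hv : v ∈ Q.carrier)
    {J : Finset α} (hvJ : v ∈ J) :
    (P.graft Q v).restrict (P.carrier ∪ J) = P.graft (Q.restrict J) v := by
  have hd' : Disjoint P.carrier (Q.restrict J).carrier := hd.mono_right Finset.inter_subset_left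
  have hv' : v ∈ (Q.restrict J).carrier := Finset.mem_inter.2 ⟨hv, hvJ⟩
  refine FinPoset.ext ?_ (funext₂ fun x y => propext ?_)
  · rw [restrict_carrier, graft_carrier hd hv, graft_carrier hd' hv', restrict_carrier]
    ext x
    have : x ∈ Q.carrier → x ∉ P.carrier := fun h => Finset.disjoint_right.1 hd h
    simp only [Finset.mem_inter, Finset.mem_union]
    tauto
  · have : x ∈ Q.carrier → x ∉ P.carrier := fun h => Finset.disjoint_right.1 hd h
    have : y ∈ Q.carrier → y ∉ P.carrier := fun h => Finset.disjoint_right.1 hd h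
    have := @P.mem_of_le x y
    have := @Q.mem_of_le x y
    have := @Q.mem_of_le x v
    rw [restrict_le_iff, graft_le_iff hd hv, graft_le_iff hd' hv', restrict_le_iff,
      restrict_le_iff]
    simp only [Finset.mem_union]
    tauto

end Graft

end FinPoset

theorem circSet_graft_not_min_general {α : Type*} [DecidableEq α] (P Q : FinPoset α)
    (hP : P.Connected) (hd : Disjoint P.carrier Q.carrier)
    (v : α) (hv : v ∈ Q.carrier) (hvm : v ∉ Q.minSet) :
    (FinPoset.graft P Q v).circSet =
        (Q.circSet.filter (fun J => v ∈ J)).image (fun J => P.carrier ∪ J) ∪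
          Q.circSet.filter (fun J => v ∉ J)
      ∧ ∀ J ∈ Q.circSet, v ∈ J →
          (FinPoset.graft P Q v).restrict (P.carrier ∪ J)
            = FinPoset.graft P (Q.restrict J) v := by
  refine ⟨?_, fun J _ hvJ => FinPoset.graft_restrict_union hd hv hvJ⟩
  ext I
  simp only [FinPoset.mem_circSet, FinPoset.graft_carrier hd hv, Finset.mem_union,
    Finset.mem_image, Finset.mem_filter]
  constructor
  · rintro ⟨hIPQ, hI⟩
    rcases hI.graft_cases hd hv hP hvm with ⟨hPI, hvI⟩ | ⟨hIQ, hvI⟩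
    · have hIJ : P.carrier ∪ I \ P.carrier = I := Finset.union_sdiff_of_subset hPI
      have hJQ : I \ P.carrier ⊆ Q.carrier := sdiff_le_iff.2 hIPQ
      have hvJ : v ∈ I \ P.carrier := Finset.mem_sdiff.2 ⟨hvI, Finset.disjoint_right.1 hd hv⟩
      rw [← hIJ, FinPoset.circ_graft_union_iff hd hv hJQ hvJ] at hI
      exact Or.inl ⟨_, ⟨⟨hJQ, hI⟩, hvJ⟩, hIJ⟩
    · exact Or.inr ⟨⟨hIQ, (FinPoset.circ_graft_iff_of_not_mem hd hv hIQ hvI).1 hI⟩, hvI⟩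
  · rintro (⟨J, ⟨⟨hJQ, hJ⟩, hvJ⟩, rfl⟩ | ⟨⟨hIQ, hI⟩, hvI⟩)
    · exact ⟨Finset.union_subset_union subset_rfl hJQ,
        (FinPoset.circ_graft_union_iff hd hv hJQ hvJ).2 hJ⟩
    · exact ⟨hIQ.trans Finset.subset_union_right,
        (FinPoset.circ_graft_iff_of_not_mem hd hv hIQ hvI).2 hI⟩

/-- For finite connected posets `P`, `Q` on disjoint sets and
`v ∈ X₂ \ min(Q)`, the subsets `I` with `I ◎ (P ↘_v Q)` are exactly the `X₁ ∪ J` for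
`J ◎ Q` with `v ∈ J`, together with the `J ◎ Q` with `v ∉ J`; moreover for `J ◎ Q`
with `v ∈ J` the induced subposet of `P ↘_v Q` on `X₁ ∪ J` is the grafting
`P ↘_v J`. -/
theorem circSet_graft_not_min {α : Type*} [DecidableEq α] (P Q : FinPoset α)
    (hP : P.Connected) (hQ : Q.Connected) (hd : Disjoint P.carrier Q.carrier)
    (v : α) (hv : v ∈ Q.carrier) (hvm : v ∉ Q.minSet) :
    (FinPoset.graft P Q v).circSet =
        (Q.circSet.filter (fun J => v ∈ J)).image (fun J => P.carrier ∪ J) ∪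
          Q.circSet.filter (fun J => v ∉ J)
      ∧ ∀ J ∈ Q.circSet, v ∈ J →
          (FinPoset.graft P Q v).restrict (P.carrier ∪ J)
            = FinPoset.graft P (Q.restrict J) v :=
  circSet_graft_not_min_general P Q hP hd v hv hvm
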